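/- arXiv:2402.07328 — 6 statements merged into one kernel-verified Lean document; each statement's English description precedes it below -/
import Mathlib

section
/- Let K be an algebraically closed field of characteristic zero and let f ∈ K(x) be a rational function with complete partial fraction decomposition f = p + Σ_{k} Σ_{α} c_k(α)/(x-α)^k, where p ∈ K[x]. Then f is rationally summable if and only if for every k ∈ ℕ and every ℤ-orbit ω ⊆ K, the discrete residue dres(f,ω,k) := Σ_{α∈ω} c_k(α) equals zero, and additionally p is summable (which always holds for polynomials). -/
open Polynomial

/-- The shift `f(x) ↦ f(x+1)` on rational functions. -/
noncomputable def shift {K : Type*} [Field K] (f : RatFunc K) : RatFunc K :=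
  RatFunc.mk (f.num.comp (Polynomial.X + 1)) (f.denom.comp (Polynomial.X + 1))

/-!
The coefficient `c_k(α)` is the coefficient of `(x - α)^(-k)` in the Laurent expansion of `f`
at `α`. Expanding `f(x+1)` at `α` is expanding `f` at `α + 1`; so if `f = g(x+1) - g(x)`, then
`c_k(α) = e_k(α+1) - e_k(α)` for the Laurent coefficients `e_k` of `g`, which vanish off the
finitely many poles of `g`, and the sum of `c_k` over an orbit telescopes to zero.

Conversely, `b/(x-α)^k` and `b/(x-α-1)^k` differ by a summable function, so modulo summable
functions the terms of `f` with poles in one orbit collapse to the discrete residue placed at a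
single point of the orbit. Polynomials are summable because
`B_{n+1}(x+1) - B_{n+1}(x) = (n+1) x^n` for the Bernoulli polynomials.
-/

open scoped LaurentSeries

namespace Polynomial

variable {R : Type*} [CommRing R] [Algebra ℚ R]

theorem X_pow_mem_range_taylor_one_sub_id (n : ℕ) :
    (X ^ n : R[X]) ∈ LinearMap.range (taylor (1 : R) - LinearMap.id) := by
  have h := congrArg (map (algebraMap ℚ R)) (bernoulli_comp_one_add_X (n + 1))
  simp only [nsmul_eq_mul, Polynomial.map_comp, Polynomial.map_add, Polynomial.map_one, map_X,
    Polynomial.map_mul, Polynomial.map_pow, Polynomial.map_natCast, add_tsub_cancel_right] at h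
  refine ⟨C (algebraMap ℚ R (n + 1 : ℕ)⁻¹) * (bernoulli (n + 1)).map (algebraMap ℚ R), ?_⟩
  rw [LinearMap.sub_apply, LinearMap.id_apply, taylor_apply, mul_comp, C_comp, map_one, add_comm X,
    h, mul_add, add_sub_cancel_left, ← mul_assoc, ← C_eq_natCast, ← C_mul,
    ← map_natCast (algebraMap ℚ R), ← map_mul, inv_mul_cancel₀ (Nat.cast_ne_zero.2 n.succ_ne_zero),
    map_one, C_1, one_mul]

theorem mem_range_taylor_one_sub_id (p : R[X]) :
    p ∈ LinearMap.range (taylor (1 : R) - LinearMap.id) := by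
  induction p using Polynomial.induction_on' with
  | add p q hp hq => exact Submodule.add_mem _ hp hq
  | monomial n a =>
    rw [← C_mul_X_pow_eq_monomial, ← smul_eq_C_mul]
    exact Submodule.smul_mem _ a (X_pow_mem_range_taylor_one_sub_id n)

end Polynomial

theorem finsum_int_add_one_sub_eq_zero {M : Type*} [AddCommGroup M] {h : ℤ → M}
    (hh : h.support.Finite) : ∑ᶠ n : ℤ, (h (n + 1) - h n) = 0 := by
  have hh' : (fun n : ℤ => h (n + 1)).support.Finite :=
    hh.preimage (add_left_injective 1).injOn
  rw [finsum_sub_distrib hh' hh, sub_eq_zero]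
  exact finsum_comp_equiv (Equiv.addRight 1) (f := h)

section IntOrbits

variable {K : Type*} [AddCommGroupWithOne K]

theorem intCast_mem_range_castAddHom (n : ℤ) : (n : K) ∈ (Int.castAddHom K).range := ⟨n, rfl⟩

variable [CharZero K]

theorem finite_support_comp_add_intCast {M : Type*} [Zero M] {c : K → M}
    (hc : c.support.Finite) (a : K) : (fun n : ℤ => c (a + n)).support.Finite :=
  hc.preimage ((add_right_injective a).comp Int.cast_injective).injOn

noncomputable def intOrbitEquiv : (K ⧸ (Int.castAddHom K).range) × ℤ ≃ K :=
  Equiv.ofBijective (fun p => p.1.out + p.2) <| by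
    constructor
    · rintro ⟨ω, n⟩ ⟨ω', n'⟩ h
      dsimp only at h
      have hω := congrArg (QuotientAddGroup.mk (s := (Int.castAddHom K).range)) h
      rw [QuotientAddGroup.mk_add_of_mem _ (intCast_mem_range_castAddHom n),
        QuotientAddGroup.mk_add_of_mem _ (intCast_mem_range_castAddHom n'),
        QuotientAddGroup.out_eq', QuotientAddGroup.out_eq'] at hω
      subst hω
      simpa using h
    · intro a
      obtain ⟨⟨_, n, rfl⟩, hn⟩ := QuotientAddGroup.mk_out_eq_add (Int.castAddHom K).range a
      exact ⟨(a, -n), by simp [hn]⟩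

theorem intOrbitEquiv_apply (p : (K ⧸ (Int.castAddHom K).range) × ℤ) :
    intOrbitEquiv p = p.1.out + p.2 := rfl

theorem finsum_apply_eq_zero_of_periodic {A N : Type*} [AddCommGroup A] [AddCommGroup N]
    {G : K → A →+ N} (hG : Function.Periodic G 1) {c : K → A} (hc : c.support.Finite)
    (horbit : ∀ a, ∑ᶠ n : ℤ, c (a + n) = 0) : ∑ᶠ a, G a (c a) = 0 := by
  have hsupp : (fun a => G a (c a)).support.Finite :=
    hc.subset fun a ha h0 => ha (by simp [h0])
  have hG' (b : K) (n : ℤ) : G (b + n) = G b := by simpa using hG.zsmul n b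
  rw [← finsum_comp_equiv intOrbitEquiv,
    finsum_curry _ (hsupp.preimage intOrbitEquiv.injective.injOn)]
  refine finsum_eq_zero_of_forall_eq_zero fun ω => ?_
  simp only [intOrbitEquiv_apply, hG']
  rw [← map_finsum _ (finite_support_comp_add_intCast hc ω.out), horbit, map_zero]

end IntOrbits

namespace RatFunc

variable {K : Type*} [Field K]

noncomputable def translate (a : K) : RatFunc K →ₐ[K] RatFunc K :=
  mapAlgHom (taylorAlgHom a) <|
    nonZeroDivisors_le_comap_nonZeroDivisors_of_injective _ (taylorEquiv a).injective

theorem translate_algebraMap (a : K) (p : K[X]) :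
    translate a (algebraMap K[X] (RatFunc K) p) = algebraMap K[X] (RatFunc K) (taylor a p) := by
  rw [translate, coe_mapAlgHom_eq_coe_map, ← div_one (algebraMap K[X] (RatFunc K) p),
    ← map_one (algebraMap K[X] (RatFunc K)), map_apply_div]
  simp

theorem translate_div (a : K) (p q : K[X]) :
    translate a (algebraMap K[X] (RatFunc K) p / algebraMap K[X] (RatFunc K) q) =
      algebraMap K[X] (RatFunc K) (taylor a p) / algebraMap K[X] (RatFunc K) (taylor a q) := by
  rw [map_div₀, translate_algebraMap, translate_algebraMap]

theorem translate_translate (a b : K) (f : RatFunc K) :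
    translate a (translate b f) = translate (a + b) f := by
  rw [← num_div_denom f, translate_div, translate_div, translate_div, taylor_taylor, taylor_taylor]

theorem translate_X (a : K) : translate a X = X + C a := by
  rw [← algebraMap_X, translate_algebraMap, taylor_X, map_add, algebraMap_X, algebraMap_C]

theorem translate_C (a b : K) : translate a (C b) = C b := by
  rw [← algebraMap_eq_C, AlgHom.commutes]

theorem shift_eq_translate_one (f : RatFunc K) : shift f = translate 1 f := by
  rw [shift, mk_eq_div, ← C_1, ← taylor_apply, ← taylor_apply]
  conv_rhs => rw [← num_div_denom f]
  rw [translate_div]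

theorem exists_algebraMap_eq_shift_sub [CharZero K] (p : K[X]) :
    ∃ q : K[X], algebraMap K[X] (RatFunc K) p =
      shift (algebraMap K[X] (RatFunc K) q) - algebraMap K[X] (RatFunc K) q := by
  obtain ⟨q, hq⟩ := Polynomial.mem_range_taylor_one_sub_id p
  refine ⟨q, ?_⟩
  rw [shift_eq_translate_one, translate_algebraMap, ← map_sub, ← hq]
  rfl

noncomputable def rationallySummable : AddSubgroup (RatFunc K) :=
  ((translate (1 : K)).toAddMonoidHom - AddMonoidHom.id _).range

theorem mem_rationallySummable {f : RatFunc K} :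
    f ∈ rationallySummable ↔ ∃ g, f = shift g - g := by
  simp [rationallySummable, shift_eq_translate_one, eq_comm]

theorem coeff_coe_div_eq_zero_of_neg (p : K[X]) {q : K[X]} (hq : q.eval 0 ≠ 0) {n : ℤ}
    (hn : n < 0) :
    ((algebraMap K[X] (RatFunc K) p / algebraMap K[X] (RatFunc K) q : RatFunc K) : K⸨X⸩).coeff n
      = 0 := by
  have hq' : PowerSeries.constantCoeff (q : PowerSeries K) ≠ 0 := by
    rwa [Polynomial.constantCoeff_coe, coeff_zero_eq_eval_zero]
  have hq0 : algebraMap K[X] (RatFunc K) q ≠ 0 := algebraMap_ne_zero (by rintro rfl; simp at hq)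
  have hpow : ((algebraMap K[X] (RatFunc K) p / algebraMap K[X] (RatFunc K) q : RatFunc K) :
      K⸨X⸩) = (((p : PowerSeries K) * (q : PowerSeries K)⁻¹ : PowerSeries K) : K⸨X⸩) := by
    rw [map_div₀, div_eq_iff ((_root_.map_ne_zero _).2 hq0), ← coePolynomial, ← coePolynomial,
      ← coe_coe, ← coe_coe, ← PowerSeries.coe_mul, mul_assoc, PowerSeries.inv_mul_cancel _ hq',
      mul_one]
  rw [hpow, PowerSeries.coeff_coe, if_pos hn]

theorem coe_C_div_X_pow (b : K) (k : ℕ) :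
    ((C b / X ^ k : RatFunc K) : K⸨X⸩) = HahnSeries.single (-(k : ℤ)) b := by
  rw [map_div₀, map_pow, coe_X, ← algebraMap_C, ← coePolynomial, ← coe_coe, Polynomial.coe_C,
    PowerSeries.coe_C, HahnSeries.single_pow, div_eq_mul_inv, HahnSeries.inv_single,
    HahnSeries.C_apply, HahnSeries.single_mul_single]
  simp

/-- The coefficient of `(X - a) ^ n` in the Laurent expansion of `f` at `a`. -/
noncomputable def laurentCoeff (a : K) (n : ℤ) : RatFunc K →+ K :=
  (HahnSeries.coeff.addMonoidHom n).comp
    ((algebraMap (RatFunc K) K⸨X⸩).toAddMonoidHom.comp (translate a).toAddMonoidHom)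

theorem laurentCoeff_apply (a : K) (n : ℤ) (f : RatFunc K) :
    laurentCoeff a n f = ((translate a f : RatFunc K) : K⸨X⸩).coeff n := rfl

theorem laurentCoeff_shift (a : K) (n : ℤ) (f : RatFunc K) :
    laurentCoeff a n (shift f) = laurentCoeff (a + 1) n f := by
  rw [shift_eq_translate_one, laurentCoeff_apply, laurentCoeff_apply, translate_translate]

theorem laurentCoeff_div_eq_zero {a : K} {n : ℤ} (hn : n < 0) (p : K[X]) {q : K[X]}
    (hq : q.eval a ≠ 0) :
    laurentCoeff a n (algebraMap K[X] (RatFunc K) p / algebraMap K[X] (RatFunc K) q) = 0 := by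
  rw [laurentCoeff_apply, translate_div]
  exact coeff_coe_div_eq_zero_of_neg _ (by rwa [taylor_eval, zero_add]) hn

theorem laurentCoeff_algebraMap {a : K} {n : ℤ} (hn : n < 0) (p : K[X]) :
    laurentCoeff a n (algebraMap K[X] (RatFunc K) p) = 0 := by
  simpa using laurentCoeff_div_eq_zero hn p (q := 1) (by simp)

theorem finite_setOf_laurentCoeff_ne_zero {n : ℤ} (hn : n < 0) (f : RatFunc K) :
    {a | laurentCoeff a n f ≠ 0}.Finite := by
  refine (Polynomial.finite_setOfPred_isRoot (denom_ne_zero f)).subset fun a ha => ?_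
  by_contra hroot
  rw [← num_div_denom f] at ha
  exact ha (laurentCoeff_div_eq_zero hn _ hroot)

theorem finsum_laurentCoeff_shift_sub_eq_zero [CharZero K] {n : ℤ} (hn : n < 0) (g : RatFunc K)
    (a : K) : ∑ᶠ m : ℤ, laurentCoeff (a + m) n (shift g - g) = 0 := by
  have hsucc (m : ℤ) : laurentCoeff (a + m) n (shift g - g) =
      laurentCoeff (a + (m + 1 : ℤ)) n g - laurentCoeff (a + m) n g := by
    rw [map_sub, laurentCoeff_shift, Int.cast_add, Int.cast_one, add_assoc]
  simp only [hsucc]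
  exact finsum_int_add_one_sub_eq_zero
    (finite_support_comp_add_intCast (finite_setOf_laurentCoeff_ne_zero hn g) a)

noncomputable def simpleFraction (k : ℕ) (a : K) : K →+ RatFunc K where
  toFun b := C b / (X - C a) ^ k
  map_zero' := by rw [map_zero, zero_div]
  map_add' b b' := by rw [map_add, add_div]

theorem simpleFraction_apply (k : ℕ) (a b : K) :
    simpleFraction k a b = C b / (X - C a) ^ k := rfl

theorem translate_simpleFraction (c : K) (k : ℕ) (a b : K) :
    translate c (simpleFraction k a b) = simpleFraction k (a - c) b := by
  rw [simpleFraction_apply, simpleFraction_apply, map_div₀, map_pow, map_sub, translate_X,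
    translate_C, translate_C, map_sub, sub_sub_eq_add_sub]

theorem laurentCoeff_simpleFraction_self (a : K) (n : ℤ) (k : ℕ) (b : K) :
    laurentCoeff a n (simpleFraction k a b) = if n = -k then b else 0 := by
  rw [laurentCoeff_apply, translate_simpleFraction, sub_self, simpleFraction_apply, map_zero,
    sub_zero, coe_C_div_X_pow, HahnSeries.coeff_single]
  congr

theorem laurentCoeff_simpleFraction_of_ne {a a' : K} (h : a' ≠ a) {n : ℤ} (hn : n < 0) (k : ℕ)
    (b : K) : laurentCoeff a n (simpleFraction k a' b) = 0 := by
  rw [simpleFraction_apply, ← algebraMap_C, ← algebraMap_C, ← algebraMap_X, ← map_sub, ← map_pow]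
  refine laurentCoeff_div_eq_zero hn _ ?_
  rw [eval_pow, eval_sub, Polynomial.eval_X, Polynomial.eval_C]
  exact pow_ne_zero _ (sub_ne_zero.2 h.symm)

theorem laurentCoeff_add_finsum_simpleFraction {c : ℕ → K → K}
    (hfin : {q : ℕ × K | c q.1 q.2 ≠ 0}.Finite) (p : K[X]) {k : ℕ} (hk : 1 ≤ k) (a : K) :
    laurentCoeff a (-k) (algebraMap K[X] (RatFunc K) p +
      ∑ᶠ (j : ℕ) (a' : K), simpleFraction j a' (c j a')) = c k a := by
  have hsupp : (fun q : ℕ × K => simpleFraction q.1 q.2 (c q.1 q.2)).support.Finite :=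
    hfin.subset fun q hq h0 => hq (by simp [h0])
  have hneg : -(k : ℤ) < 0 := by omega
  rw [map_add, laurentCoeff_algebraMap hneg, zero_add, ← finsum_curry _ hsupp,
    map_finsum _ hsupp, finsum_eq_single _ (k, a)]
  · simp [laurentCoeff_simpleFraction_self]
  · rintro ⟨j, a'⟩ hne
    by_cases ha : a' = a
    · subst ha
      rw [laurentCoeff_simpleFraction_self, if_neg]
      exact fun hjk => hne (by rw [neg_inj, Nat.cast_inj] at hjk; rw [hjk])
    · exact laurentCoeff_simpleFraction_of_ne ha hneg _ _

theorem simpleFraction_sub_simpleFraction_add_one_mem (k : ℕ) (a b : K) :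
    simpleFraction k a b - simpleFraction k (a + 1) b ∈ rationallySummable := by
  rw [mem_rationallySummable]
  refine ⟨simpleFraction k (a + 1) b, ?_⟩
  rw [shift_eq_translate_one, translate_simpleFraction, add_sub_cancel_right]

theorem finsum_simpleFraction_mem_rationallySummable [CharZero K] (k : ℕ) {c : K → K}
    (hc : c.support.Finite) (horbit : ∀ a, ∑ᶠ n : ℤ, c (a + n) = 0) :
    ∑ᶠ a, simpleFraction k a (c a) ∈ rationallySummable := by
  have hsupp : (fun a => simpleFraction k a (c a)).support.Finite :=
    hc.subset fun a ha h0 => ha (by simp [h0])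
  rw [← QuotientAddGroup.eq_zero_iff, ← QuotientAddGroup.mk'_apply, map_finsum _ hsupp]
  refine finsum_apply_eq_zero_of_periodic
    (G := fun a => (QuotientAddGroup.mk' rationallySummable).comp (simpleFraction k a))
    (fun a => ?_) hc horbit
  ext b
  simpa [QuotientAddGroup.eq_iff_sub_mem] using
    neg_mem (simpleFraction_sub_simpleFraction_add_one_mem k a b)

end RatFunc

theorem summable_iff_discrete_residues_zero_general {K : Type*} [Field K] [CharZero K]
    (f : RatFunc K) (p : Polynomial K) (c : ℕ → K → K)
    (hfin : {q : ℕ × K | c q.1 q.2 ≠ 0}.Finite)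
    (hord : ∀ k α, c k α ≠ 0 → 1 ≤ k)
    (hf : f = algebraMap (Polynomial K) (RatFunc K) p +
      ∑ᶠ (k : ℕ) (α : K), RatFunc.C (c k α) / (RatFunc.X - RatFunc.C α) ^ k) :
    (∃ g : RatFunc K, f = shift g - g) ↔
      ((∀ k : ℕ, 1 ≤ k → ∀ α : K, (∑ᶠ n : ℤ, c k (α + (n : K))) = 0) ∧
        ∃ q : Polynomial K, algebraMap (Polynomial K) (RatFunc K) p =
          shift (algebraMap (Polynomial K) (RatFunc K) q) -
            algebraMap (Polynomial K) (RatFunc K) q) := by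
  have hcoeff (k : ℕ) (hk : 1 ≤ k) (a : K) : c k a = RatFunc.laurentCoeff a (-k) f := by
    rw [hf]
    exact (RatFunc.laurentCoeff_add_finsum_simpleFraction hfin p hk a).symm
  refine ⟨fun ⟨g, hg⟩ => ⟨fun k hk a => ?_, RatFunc.exists_algebraMap_eq_shift_sub p⟩,
    fun ⟨hres, q, hq⟩ => ?_⟩
  · simp only [hcoeff k hk, hg]
    exact RatFunc.finsum_laurentCoeff_shift_sub_eq_zero (by omega) g a
  · rw [← RatFunc.mem_rationallySummable, hf]
    refine add_mem (RatFunc.mem_rationallySummable.2 ⟨_, hq⟩) <|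
      finsum_induction _ (zero_mem _) (fun _ _ => add_mem) fun k =>
        RatFunc.finsum_simpleFraction_mem_rationallySummable k
          (hfin.preimage (Prod.mk_right_injective k).injOn) fun a => ?_
    rcases Nat.eq_zero_or_pos k with rfl | hk
    · have hc0 (a : K) : c 0 a = 0 := by_contra fun h => absurd (hord 0 a h) (by omega)
      simp [hc0]
    · exact hres k hk a

/-- A rational function `f` with complete partial fraction decomposition
`f = p + Σ_k Σ_α c_k(α)/(x-α)^k` is rationally summable if and only if all its
discrete residues `dres(f,ω,k) = Σ_{α∈ω} c_k(α)` vanish and `p` is summable. -/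
theorem summable_iff_discrete_residues_zero {K : Type*} [Field K] [CharZero K] [IsAlgClosed K]
    (f : RatFunc K) (p : Polynomial K) (c : ℕ → K → K)
    (hfin : {q : ℕ × K | c q.1 q.2 ≠ 0}.Finite)
    (hord : ∀ k α, c k α ≠ 0 → 1 ≤ k)
    (hf : f = algebraMap (Polynomial K) (RatFunc K) p +
      ∑ᶠ (k : ℕ) (α : K), RatFunc.C (c k α) / (RatFunc.X - RatFunc.C α) ^ k) :
    (∃ g : RatFunc K, f = shift g - g) ↔
      ((∀ k : ℕ, 1 ≤ k → ∀ α : K, (∑ᶠ n : ℤ, c k (α + (n : K))) = 0) ∧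
        ∃ q : Polynomial K, algebraMap (Polynomial K) (RatFunc K) p =
          shift (algebraMap (Polynomial K) (RatFunc K) q) -
            algebraMap (Polynomial K) (RatFunc K) q) :=
  summable_iff_discrete_residues_zero_general f p c hfin hord hf
end

section
/- Let K be a field of characteristic zero and let f = a/b ∈ K(x) be a nonzero proper rational function with gcd(a,b)=1 and b nonconstant. If f is rationally summable, then the polar dispersion of f is positive; that is, there exists ℓ ∈ ℕ, ℓ ≥ 1, with gcd(b(x), b(x+ℓ)) nonconstant. -/
/-!
Write `g = c / d` in lowest terms, so that `a d(x+1) d(x) = b (c(x+1) d(x) - c(x) d(x+1))`, and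
work over an algebraic closure. A root `α` of `b` is not a root of `a`, so `d` vanishes at `α` or
`α + 1`; hence `d` has roots on the orbit `α + ℤ`, and only finitely many. If `d(α + j) = 0` with `j`
maximal, evaluating the identity at `α + j` forces `b(α + j) = 0`; if `d(α + i + 1) = 0` with `i + 1`
minimal, evaluating at `α + i` forces `b(α + i) = 0`. Since `i < j`, the roots `α + i` and `α + j`
of `b` differ by a positive integer `ℓ`, which makes `gcd(b(x), b(x + ℓ))` nonconstant.
-/

open Polynomial

theorem Int.exists_entry_lt_exit_of_finite {S : Set ℤ} (hS : S.Finite) (hne : S.Nonempty) :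
    ∃ i j : ℤ, i < j ∧ i ∉ S ∧ i + 1 ∈ S ∧ j ∈ S ∧ j + 1 ∉ S := by
  lift S to Finset ℤ using hS
  have hne : S.Nonempty := Finset.coe_nonempty.mp hne
  refine ⟨S.min' hne - 1, S.max' hne, ?_, fun h => ?_, by simpa using S.min'_mem hne,
    S.max'_mem hne, fun h => ?_⟩
  · linarith [S.min'_le_max' hne]
  · linarith [S.min'_le _ h]
  · linarith [S.le_max' _ h]

namespace Polynomial

variable {F L : Type*} [Field F] [Field L]

theorem not_isRoot_of_isCoprime {p q : F[X]} (h : IsCoprime p q) {x : F} (hp : p.IsRoot x) :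
    ¬q.IsRoot x := by
  simpa [coe_aeval_eq_eval, hp.eq_zero] using aeval_ne_zero_of_isCoprime h x

theorem degree_gcd_comp_X_add_C_pos [DecidableEq F] (φ : F →+* L) {b : F[X]} (hb : b ≠ 0)
    (c : F) {x : L} (hx : (b.map φ).IsRoot x) (hxc : (b.map φ).IsRoot (x + φ c)) :
    0 < (gcd b (b.comp (X + C c))).degree := by
  by_contra! hdeg
  have hunit : IsUnit (gcd b (b.comp (X + C c))) :=
    isUnit_iff_degree_eq_zero.mpr (hdeg.antisymm (zero_le_degree_iff.mpr (gcd_ne_zero_of_left hb)))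
  have hcop := (isCoprime_map φ).mpr ((gcd_isUnit_iff _ _).mp hunit)
  refine not_isRoot_of_isCoprime hcop hx ?_
  simpa [Polynomial.map_comp, IsRoot, eval_comp] using hxc

/-- `A / B = C(x+1) / D(x+1) - C(x) / D(x)` with denominators cleared. -/
def IsShiftDifference (A B C D : F[X]) : Prop :=
  A * (D.comp (X + 1) * D) = B * (C.comp (X + 1) * D - C * D.comp (X + 1))

namespace IsShiftDifference

variable {A B C D : F[X]}

theorem map (h : IsShiftDifference A B C D) (φ : F →+* L) :
    IsShiftDifference (A.map φ) (B.map φ) (C.map φ) (D.map φ) := by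
  simpa [IsShiftDifference, Polynomial.map_comp] using congrArg (Polynomial.map φ) h

theorem eval (h : IsShiftDifference A B C D) (x : F) :
    A.eval x * (D.eval (x + 1) * D.eval x) =
      B.eval x * (C.eval (x + 1) * D.eval x - C.eval x * D.eval (x + 1)) := by
  simpa [eval_comp] using congrArg (Polynomial.eval x) h

theorem isRoot_or_isRoot_add_one (h : IsShiftDifference A B C D) (hAB : IsCoprime A B) {x : F}
    (hx : B.IsRoot x) : D.IsRoot x ∨ D.IsRoot (x + 1) := by
  have hA : A.eval x ≠ 0 := not_isRoot_of_isCoprime hAB.symm hx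
  have := h.eval x
  simp_all [hx.eq_zero, or_comm]

theorem isRoot_of_isRoot_of_not_isRoot_add_one (h : IsShiftDifference A B C D)
    (hCD : IsCoprime C D) {x : F} (hx : D.IsRoot x) (hx₁ : ¬D.IsRoot (x + 1)) : B.IsRoot x := by
  have hC : C.eval x ≠ 0 := not_isRoot_of_isCoprime hCD.symm hx
  have := h.eval x
  simp_all [hx.eq_zero, IsRoot]

theorem isRoot_of_not_isRoot_of_isRoot_add_one (h : IsShiftDifference A B C D)
    (hCD : IsCoprime C D) {x : F} (hx : ¬D.IsRoot x) (hx₁ : D.IsRoot (x + 1)) : B.IsRoot x := by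
  have hC : C.eval (x + 1) ≠ 0 := not_isRoot_of_isCoprime hCD.symm hx₁
  have := h.eval x
  simp_all [hx₁.eq_zero, IsRoot]

theorem exists_isRoot_add_natCast [CharZero F] (h : IsShiftDifference A B C D) (hD : D ≠ 0)
    (hAB : IsCoprime A B) (hCD : IsCoprime C D) {α : F} (hα : B.IsRoot α) :
    ∃ (x : F) (ℓ : ℕ), 1 ≤ ℓ ∧ B.IsRoot x ∧ B.IsRoot (x + ℓ) := by
  set S : Set ℤ := {n | D.IsRoot (α + n)}
  have hS : S.Finite := (finite_setOfPred_isRoot hD).preimage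
    ((add_right_injective α).comp Int.cast_injective).injOn
  have hne : S.Nonempty := by
    rcases h.isRoot_or_isRoot_add_one hAB hα with h₀ | h₁
    · exact ⟨0, by simpa [S] using h₀⟩
    · exact ⟨1, by simpa [S] using h₁⟩
  obtain ⟨i, j, hij, hi, hi₁, hj, hj₁⟩ := Int.exists_entry_lt_exit_of_finite hS hne
  have hij' : α + i + ((j - i).toNat : F) = α + j := by
    rw [← Int.cast_natCast, Int.toNat_of_nonneg (by omega)]
    push_cast
    ring
  refine ⟨α + i, (j - i).toNat, by omega, ?_, ?_⟩
  · exact h.isRoot_of_not_isRoot_of_isRoot_add_one hCD hi (by simpa [S, add_assoc] using hi₁)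
  · rw [hij']
    exact h.isRoot_of_isRoot_of_not_isRoot_add_one hCD hj (by simpa [S, add_assoc] using hj₁)

end IsShiftDifference

end Polynomial

theorem isShiftDifference_of_div_eq_shift_sub {K : Type*} [Field K] {a b : K[X]} (hb : b ≠ 0)
    {g : RatFunc K}
    (h : algebraMap K[X] (RatFunc K) a / algebraMap K[X] (RatFunc K) b = shift g - g) :
    IsShiftDifference a b g.num g.denom := by
  have hd₁ : g.denom.comp (X + 1) ≠ 0 := by
    simpa using comp_X_add_C_ne_zero_iff (t := (1 : K)).mpr g.denom_ne_zero
  have hB := RatFunc.algebraMap_ne_zero hb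
  have hD := RatFunc.algebraMap_ne_zero g.denom_ne_zero
  have hD₁ := RatFunc.algebraMap_ne_zero hd₁
  rw [shift, RatFunc.mk_eq_div] at h
  -- only the bare `g`, not the ones inside `g.num` and `g.denom`
  nth_rw 3 [← RatFunc.num_div_denom g] at h
  field_simp at h
  apply IsFractionRing.injective K[X] (RatFunc K)
  simp only [map_mul, map_sub]
  linear_combination h

theorem summable_implies_positive_dispersion_general {K : Type*} [Field K] [CharZero K] [DecidableEq K]
    (a b : Polynomial K) (hcop : IsCoprime a b) (hb : 0 < b.degree)
    (hsum : ∃ g : RatFunc K,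
      algebraMap (Polynomial K) (RatFunc K) a / algebraMap (Polynomial K) (RatFunc K) b =
        shift g - g) :
    ∃ ℓ : ℕ, 1 ≤ ℓ ∧
      0 < (gcd b (b.comp (Polynomial.X + Polynomial.C (ℓ : K)))).degree := by
  obtain ⟨g, hg⟩ := hsum
  have hb₀ : b ≠ 0 := ne_zero_of_degree_gt hb
  let φ := algebraMap K (AlgebraicClosure K)
  obtain ⟨α, hα⟩ := IsAlgClosed.exists_root (b.map φ) (by rw [degree_map]; exact hb.ne')
  obtain ⟨x, ℓ, hℓ, hx, hxℓ⟩ := ((isShiftDifference_of_div_eq_shift_sub hb₀ hg).map φ)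
    |>.exists_isRoot_add_natCast (map_ne_zero g.denom_ne_zero) ((isCoprime_map φ).mpr hcop)
      ((isCoprime_map φ).mpr g.isCoprime_num_denom) hα
  exact ⟨ℓ, hℓ, degree_gcd_comp_X_add_C_pos φ hb₀ ℓ hx (by rwa [map_natCast])⟩

/-- Abramov: a nonzero proper rational function that is rationally summable has
positive polar dispersion: some `ℓ ≥ 1` has `gcd(b(x), b(x+ℓ))` nonconstant. -/
theorem summable_implies_positive_dispersion {K : Type*} [Field K] [CharZero K] [DecidableEq K]
    (a b : Polynomial K) (ha : a ≠ 0) (hprop : a.degree < b.degree)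
    (hcop : IsCoprime a b) (hb : 0 < b.degree)
    (hsum : ∃ g : RatFunc K,
      algebraMap (Polynomial K) (RatFunc K) a / algebraMap (Polynomial K) (RatFunc K) b =
        shift g - g) :
    ∃ ℓ : ℕ, 1 ≤ ℓ ∧
      0 < (gcd b (b.comp (Polynomial.X + Polynomial.C (ℓ : K)))).degree :=
  summable_implies_positive_dispersion_general a b hcop hb hsum
end

section
/- Let K be an algebraically closed field of characteristic zero and f ∈ K(x) proper with squarefree denominator b, and suppose disp(b) = 0 (no two distinct roots of b differ by a nonzero integer). If f is rationally summable, then f = 0. -/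
open Polynomial

lemma comp_X_add_one_monic {K : Type*} [Field K] {p : K[X]} (hp : p.Monic) :
    (p.comp (Polynomial.X + 1)).Monic := by
  have : (Polynomial.X + 1 : K[X]) = Polynomial.X + Polynomial.C 1 := by simp
  rw [this]
  exact hp.comp_X_add_C 1

lemma isCoprime_comp {K : Type*} [Field K] {p q : K[X]} (h : IsCoprime p q) :
    IsCoprime (p.comp (Polynomial.X + 1)) (q.comp (Polynomial.X + 1)) := by
  have := h.map (Polynomial.eval₂RingHom (Polynomial.C : K →+* K[X]) (Polynomial.X + 1))
  simpa [Polynomial.comp] using this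

lemma shift_denom {K : Type*} [Field K] (g : RatFunc K) :
    (shift g).denom = g.denom.comp (Polynomial.X + 1) := by
  have hm : (g.denom.comp (Polynomial.X + 1)).Monic :=
    comp_X_add_one_monic (g.monic_denom)
  have hne : g.denom.comp (Polynomial.X + 1) ≠ 0 := hm.ne_zero
  have hdiv : shift g = algebraMap K[X] (RatFunc K) (g.num.comp (Polynomial.X + 1)) /
      algebraMap K[X] (RatFunc K) (g.denom.comp (Polynomial.X + 1)) := RatFunc.mk_eq_div _ _
  have d1 : (shift g).denom ∣ g.denom.comp (Polynomial.X + 1) := by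
    rw [hdiv]; exact RatFunc.denom_div_dvd _ _
  have cross : (shift g).num * (g.denom.comp (Polynomial.X + 1)) =
      (g.num.comp (Polynomial.X + 1)) * (shift g).denom :=
    (RatFunc.num_mul_eq_mul_denom_iff hne).mpr hdiv
  have hcop : IsCoprime (g.num.comp (Polynomial.X + 1)) (g.denom.comp (Polynomial.X + 1)) :=
    isCoprime_comp (g.isCoprime_num_denom)
  have d2 : g.denom.comp (Polynomial.X + 1) ∣ (shift g).denom := by
    refine hcop.symm.dvd_of_dvd_mul_left ?_
    exact ⟨(shift g).num, by rw [← cross]; ring⟩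
  exact (Polynomial.eq_of_monic_of_associated hm ((shift g).monic_denom)
    (associated_of_dvd_dvd d2 d1)).symm

lemma denom_neg' {K : Type*} [Field K] (g : RatFunc K) : (-g).denom = g.denom := by
  have d1 : (-g).denom ∣ g.denom := by
    rw [RatFunc.denom_dvd (g.denom_ne_zero)]
    exact ⟨-g.num, by rw [map_neg, neg_div, RatFunc.num_div_denom]⟩
  have d2 : g.denom ∣ (-g).denom := by
    rw [RatFunc.denom_dvd ((-g).denom_ne_zero)]
    refine ⟨-(-g).num, ?_⟩
    rw [map_neg, neg_div, RatFunc.num_div_denom, neg_neg]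
  exact Polynomial.eq_of_monic_of_associated ((-g).monic_denom) (g.monic_denom)
    (associated_of_dvd_dvd d1 d2)

/-- A proper rational function with squarefree denominator of dispersion zero
(no two roots of the denominator differ by a nonzero integer) that is rationally
summable must be zero. -/
theorem reduced_summable_is_zero {K : Type*} [Field K] [CharZero K] [IsAlgClosed K]
    (f : RatFunc K) (hprop : f.num.degree < f.denom.degree)
    (hsf : Squarefree f.denom)
    (hdisp : ∀ ℓ : ℕ, 1 ≤ ℓ →
      IsCoprime f.denom (f.denom.comp (Polynomial.X + Polynomial.C (ℓ : K))))
    (hsum : ∃ g : RatFunc K, f = shift g - g) :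
    f = 0 := by
  obtain ⟨g, hf⟩ := hsum
  set b := f.denom with hb
  set d := g.denom with hd
  -- the three divisibility relations
  have hfd : b ∣ d.comp (Polynomial.X + 1) * d := by
    have := RatFunc.denom_add_dvd (shift g) (-g)
    rw [← sub_eq_add_neg, ← hf, denom_neg', shift_denom] at this
    exact this
  have hgd : d ∣ d.comp (Polynomial.X + 1) * b := by
    have h1 : g = shift g + (-f) := by rw [hf]; ring
    have := RatFunc.denom_add_dvd (shift g) (-f)
    rw [← h1, denom_neg', shift_denom] at this
    exact this
  have hsd : d.comp (Polynomial.X + 1) ∣ b * d := by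
    have h1 : shift g = f + g := by rw [hf]; ring
    have := RatFunc.denom_add_dvd f g
    rw [← h1, shift_denom] at this
    exact this
  have hd1 : d = 1 := by
    by_contra hd1
    have hdeg : d.degree ≠ 0 := by
      intro h
      exact hd1 (((g.monic_denom).natDegree_eq_zero).mp
        (Polynomial.natDegree_eq_zero_iff_degree_le_zero.mpr h.le))
    obtain ⟨β, hβ⟩ := IsAlgClosed.exists_root d hdeg
    -- roots of d along the ℤ-chain of β, upward and downward
    have hfinU : {n : ℕ | d.eval (β + n) = 0}.Finite := by
      have h2 : {x : K | d.IsRoot x}.Finite :=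
        Polynomial.finite_setOf_isRoot (g.denom_ne_zero)
      refine Set.Finite.preimage (f := fun n : ℕ => β + (n : K)) ?_ h2
      intro a _ c _ h
      have : (a : K) = c := by simpa using h
      exact_mod_cast this
    have hfinD : {m : ℕ | d.eval (β - m) = 0}.Finite := by
      have h2 : {x : K | d.IsRoot x}.Finite :=
        Polynomial.finite_setOf_isRoot (g.denom_ne_zero)
      refine Set.Finite.preimage (f := fun m : ℕ => β - (m : K)) ?_ h2
      intro a _ c _ h
      have : (a : K) = c := by
        simp only at h
        linear_combination -h
      exact_mod_cast this
    have hU0 : (0 : ℕ) ∈ hfinU.toFinset := by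
      simp [Polynomial.IsRoot] at hβ ⊢
      simpa using hβ
    have hD0 : (0 : ℕ) ∈ hfinD.toFinset := by
      simp [Polynomial.IsRoot] at hβ ⊢
      simpa using hβ
    set n := hfinU.toFinset.max' ⟨0, hU0⟩ with hn
    set m := hfinD.toFinset.max' ⟨0, hD0⟩ with hm
    have hPn : d.eval (β + n) = 0 := by
      have := hfinU.toFinset.max'_mem ⟨0, hU0⟩
      simpa using this
    have hQm : d.eval (β - m) = 0 := by
      have := hfinD.toFinset.max'_mem ⟨0, hD0⟩
      simpa using this
    have hPn1 : d.eval (β + n + 1) ≠ 0 := by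
      intro h
      have hmem : (n + 1) ∈ hfinU.toFinset := by
        simp only [Set.Finite.mem_toFinset, Set.mem_setOf_eq]
        push_cast
        rw [← add_assoc]
        exact h
      have := hfinU.toFinset.le_max' _ hmem
      omega
    have hQm1 : d.eval (β - m - 1) ≠ 0 := by
      intro h
      have hmem : (m + 1) ∈ hfinD.toFinset := by
        simp only [Set.Finite.mem_toFinset, Set.mem_setOf_eq]
        push_cast
        rw [sub_add_eq_sub_sub]
        exact h
      have := hfinD.toFinset.le_max' _ hmem
      omega
    -- evaluations of comp
    have evalcomp : ∀ (p : K[X]) (x : K), (p.comp (Polynomial.X + 1)).eval x = p.eval (x + 1) := by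
      intro p x; simp [Polynomial.eval_comp]
    -- b vanishes at β + n
    have hA : b.eval (β + n) = 0 := by
      obtain ⟨c, hc⟩ := hgd
      have h0 : (d.comp (Polynomial.X + 1)).eval (β + n) * b.eval (β + n) = 0 := by
        have := congrArg (Polynomial.eval (β + (n : K))) hc
        simp only [Polynomial.eval_mul] at this
        rw [this, hPn, zero_mul]
      have h1 : (d.comp (Polynomial.X + 1)).eval (β + n) ≠ 0 := by
        rw [evalcomp]; exact hPn1
      exact (mul_eq_zero.mp h0).resolve_left h1
    -- b vanishes at β - m - 1
    have hB : b.eval (β - m - 1) = 0 := by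
      obtain ⟨c, hc⟩ := hsd
      have h0 : b.eval (β - m - 1) * d.eval (β - m - 1) = 0 := by
        have := congrArg (Polynomial.eval (β - (m : K) - 1)) hc
        simp only [Polynomial.eval_mul, evalcomp] at this
        rw [this]
        have : β - (m : K) - 1 + 1 = β - m := by ring
        rw [this, hQm, zero_mul]
      exact (mul_eq_zero.mp h0).resolve_right hQm1
    -- contradiction with dispersion-zero
    obtain ⟨u, v, huv⟩ := hdisp (n + m + 1) (by omega)
    have := congrArg (Polynomial.eval (β - (m : K) - 1)) huv
    simp only [Polynomial.eval_add, Polynomial.eval_mul, Polynomial.eval_one,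
      Polynomial.eval_comp, Polynomial.eval_X, Polynomial.eval_C] at this
    have harg : β - (m : K) - 1 + ((n + m + 1 : ℕ) : K) = β + n := by
      push_cast; ring
    rw [hB, harg, hA] at this
    simp at this
  -- now `d = 1`, so `f` is a polynomial; properness forces `f = 0`
  have hbdvd : b ∣ 1 := by
    rw [hd1] at hfd
    simpa using hfd
  have hb1 : b = 1 := (f.monic_denom).eq_one_of_isUnit (isUnit_of_dvd_one hbdvd)
  rw [hb1, Polynomial.degree_one] at hprop
  have : f.num = 0 := Polynomial.degree_eq_bot.mp (Nat.WithBot.lt_zero_iff.mp hprop)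
  rwa [RatFunc.num_eq_zero_iff] at this
end

section
/- Let K be a field of characteristic zero, b ∈ K[x] monic squarefree nonconstant with shift set S = {ℓ ∈ ℕ : gcd(b(x),b(x+ℓ)) ≠ 1} nonempty. Define g_ℓ = gcd(b(x), b(x-ℓ)) for ℓ ∈ S, G = lcm(g_ℓ : ℓ ∈ S), and b₀ = b/G. Then b₀ divides b, disp(b₀) = 0, and over the algebraic closure the roots of b₀ are exactly those roots α of b such that α - ℓ is not a root of b for any ℓ ∈ ℕ. -/
open Polynomial

section Aux

variable {K : Type*} [Field K] [CharZero K] [DecidableEq K]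

local notation "cl" => AlgebraicClosure K

lemma aux_comp_map_eval (b : Polynomial K) (c : K) (α : cl) :
    ((b.comp (Polynomial.X - Polynomial.C c)).map (algebraMap K cl)).eval α
      = (b.map (algebraMap K cl)).eval (α - algebraMap K cl c) := by
  rw [Polynomial.map_comp, Polynomial.map_sub, Polynomial.map_X, Polynomial.map_C,
    Polynomial.eval_comp, Polynomial.eval_sub, Polynomial.eval_X, Polynomial.eval_C]

lemma aux_comp_map_eval' (b : Polynomial K) (c : K) (α : cl) :
    ((b.comp (Polynomial.X + Polynomial.C c)).map (algebraMap K cl)).eval α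
      = (b.map (algebraMap K cl)).eval (α + algebraMap K cl c) := by
  rw [Polynomial.map_comp, Polynomial.map_add, Polynomial.map_X, Polynomial.map_C,
    Polynomial.eval_comp, Polynomial.eval_add, Polynomial.eval_X, Polynomial.eval_C]

lemma aux_no_common_root {p q : Polynomial K} (h : IsCoprime p q) (α : cl)
    (hp : (p.map (algebraMap K cl)).IsRoot α) (hq : (q.map (algebraMap K cl)).IsRoot α) :
    False := by
  obtain ⟨u, v, huv⟩ := h.map (Polynomial.mapRingHom (algebraMap K cl))
  have := congrArg (Polynomial.eval α) huv
  simp only [Polynomial.eval_add, Polynomial.eval_mul, Polynomial.eval_one,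
    Polynomial.coe_mapRingHom] at this
  rw [hp.eq_zero, hq.eq_zero, mul_zero, mul_zero, add_zero] at this
  exact zero_ne_one this

end Aux

/-- The divisor of initial roots: for monic squarefree nonconstant `b` with
nonempty shift set `S`, setting `g_ℓ = gcd(b(x), b(x-ℓ))`, `G = lcm(g_ℓ : ℓ ∈ S)`
and `b₀ = b/G`, we have `b₀ ∣ b`, `disp(b₀) = 0`, and over the algebraic closure
the roots of `b₀` are exactly the roots `α` of `b` such that `α - ℓ` is not a
root of `b` for any positive integer `ℓ`. -/
theorem initial_roots_divisor {K : Type*} [Field K] [CharZero K] [DecidableEq K]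
    (b : Polynomial K) (hmonic : b.Monic) (hsf : Squarefree b) (hdeg : 0 < b.degree)
    (S : Finset ℕ)
    (hS : ∀ ℓ : ℕ, ℓ ∈ S ↔ (1 ≤ ℓ ∧ ¬ IsCoprime b (b.comp (Polynomial.X + Polynomial.C (ℓ : K)))))
    (hne : S.Nonempty)
    (G b₀ : Polynomial K)
    (hG : G = S.lcm fun ℓ => gcd b (b.comp (Polynomial.X - Polynomial.C (ℓ : K))))
    (hb₀ : b₀ = b / G) :
    b₀ ∣ b ∧
    (∀ ℓ : ℕ, 1 ≤ ℓ → IsCoprime b₀ (b₀.comp (Polynomial.X + Polynomial.C (ℓ : K)))) ∧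
    (∀ α : AlgebraicClosure K,
      (b₀.map (algebraMap K (AlgebraicClosure K))).IsRoot α ↔
        ((b.map (algebraMap K (AlgebraicClosure K))).IsRoot α ∧
          ∀ ℓ : ℕ, 1 ≤ ℓ →
            ¬ (b.map (algebraMap K (AlgebraicClosure K))).IsRoot (α - (ℓ : AlgebraicClosure K)))) := by
  classical
  set φ := algebraMap K (AlgebraicClosure K) with hφ
  have hb0 : b ≠ 0 := hmonic.ne_zero
  -- G divides b
  have hGb : G ∣ b := by
    rw [hG]
    exact Finset.lcm_dvd fun ℓ _ => gcd_dvd_left _ _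
  have hGne : G ≠ 0 := by
    rintro rfl
    exact hb0 (zero_dvd_iff.mp hGb)
  have hbGb₀ : b = G * b₀ := by
    rw [hb₀]
    exact (EuclideanDomain.mul_div_cancel' hGne hGb).symm
  have hb₀dvd : b₀ ∣ b := ⟨G, by rw [hbGb₀, mul_comm]⟩
  have hb₀ne : b₀ ≠ 0 := by
    rintro rfl
    rw [mul_zero] at hbGb₀
    exact hb0 hbGb₀
  -- G and b₀ are coprime
  have hcop : IsCoprime G b₀ := by
    rw [← gcd_isUnit_iff]
    refine hsf (gcd G b₀) ?_
    rw [hbGb₀]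
    exact mul_dvd_mul (gcd_dvd_left _ _) (gcd_dvd_right _ _)
  -- characterization of roots of G over the closure
  have hGroot : ∀ α : AlgebraicClosure K,
      (G.map φ).IsRoot α ↔
        ∃ ℓ ∈ S, (b.map φ).IsRoot α ∧ (b.map φ).IsRoot (α - (ℓ : AlgebraicClosure K)) := by
    intro α
    constructor
    · intro hroot
      have hGprod : G ∣ ∏ ℓ ∈ S, gcd b (b.comp (Polynomial.X - Polynomial.C (ℓ : K))) := by
        rw [hG]
        exact Finset.lcm_dvd fun ℓ hℓ => Finset.dvd_prod_of_mem _ hℓ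
      have hXsub : (Polynomial.X - Polynomial.C α) ∣
          ∏ ℓ ∈ S, (gcd b (b.comp (Polynomial.X - Polynomial.C (ℓ : K)))).map φ := by
        rw [← Polynomial.map_prod]
        exact (Polynomial.dvd_iff_isRoot.mpr hroot).trans (Polynomial.map_dvd _ hGprod)
      obtain ⟨ℓ, hℓS, hℓdvd⟩ := (Polynomial.prime_X_sub_C α).exists_mem_finset_dvd hXsub
      have hgroot : ((gcd b (b.comp (Polynomial.X - Polynomial.C (ℓ : K)))).map φ).IsRoot α :=
        Polynomial.dvd_iff_isRoot.mp hℓdvd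
      refine ⟨ℓ, hℓS, ?_, ?_⟩
      · exact hgroot.dvd (Polynomial.map_dvd _ (gcd_dvd_left _ _))
      · have := hgroot.dvd (Polynomial.map_dvd _
          (gcd_dvd_right b (b.comp (Polynomial.X - Polynomial.C (ℓ : K)))))
        rwa [Polynomial.IsRoot, aux_comp_map_eval, map_natCast] at this
    · rintro ⟨ℓ, hℓS, hα, hαℓ⟩
      -- the Euclidean gcd has α as a root
      have h1 : b.eval₂ φ α = 0 := by rwa [Polynomial.eval₂_eq_eval_map]
      have h2 : (b.comp (Polynomial.X - Polynomial.C (ℓ : K))).eval₂ φ α = 0 := by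
        rw [Polynomial.eval₂_eq_eval_map, aux_comp_map_eval, map_natCast]
        exact hαℓ
      have hgroot : (EuclideanDomain.gcd b
          (b.comp (Polynomial.X - Polynomial.C (ℓ : K)))).eval₂ φ α = 0 :=
        Polynomial.eval₂_gcd_eq_zero h1 h2
      rw [Polynomial.eval₂_eq_eval_map] at hgroot
      have hdvd1 : EuclideanDomain.gcd b (b.comp (Polynomial.X - Polynomial.C (ℓ : K))) ∣
          gcd b (b.comp (Polynomial.X - Polynomial.C (ℓ : K))) :=
        dvd_gcd (EuclideanDomain.gcd_dvd_left _ _) (EuclideanDomain.gcd_dvd_right _ _)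
      have hdvd2 : gcd b (b.comp (Polynomial.X - Polynomial.C (ℓ : K))) ∣ G := by
        rw [hG]; exact Finset.dvd_lcm hℓS
      exact Polynomial.IsRoot.dvd hgroot (Polynomial.map_dvd _ (hdvd1.trans hdvd2))
  -- part 3
  have part3 : ∀ α : AlgebraicClosure K,
      (b₀.map φ).IsRoot α ↔
        ((b.map φ).IsRoot α ∧
          ∀ ℓ : ℕ, 1 ≤ ℓ → ¬ (b.map φ).IsRoot (α - (ℓ : AlgebraicClosure K))) := by
    intro α
    constructor
    · intro hroot
      have hbα : (b.map φ).IsRoot α := hroot.dvd (Polynomial.map_dvd _ hb₀dvd)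
      refine ⟨hbα, fun ℓ hℓ hbad => ?_⟩
      have hℓS : ℓ ∈ S := by
        rw [hS]
        refine ⟨hℓ, fun hc => ?_⟩
        refine aux_no_common_root hc (α - (ℓ : AlgebraicClosure K)) hbad ?_
        rw [Polynomial.IsRoot, aux_comp_map_eval', map_natCast, sub_add_cancel]
        exact hbα
      have hGα : (G.map φ).IsRoot α := (hGroot α).mpr ⟨ℓ, hℓS, hbα, hbad⟩
      exact aux_no_common_root hcop α hGα hroot
    · rintro ⟨hbα, hno⟩
      have : (G.map φ).eval α * (b₀.map φ).eval α = 0 := by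
        rw [← Polynomial.eval_mul, ← Polynomial.map_mul, ← hbGb₀]
        exact hbα
      rcases mul_eq_zero.mp this with h | h
      · obtain ⟨ℓ, hℓS, _, hbad⟩ := (hGroot α).mp h
        exact absurd hbad (hno ℓ ((hS ℓ).mp hℓS).1)
      · exact h
  refine ⟨hb₀dvd, ?_, part3⟩
  -- part 2
  intro ℓ hℓ
  by_contra hnc
  set q := b₀.comp (Polynomial.X + Polynomial.C (ℓ : K)) with hq
  have hd : ¬ IsUnit (EuclideanDomain.gcd b₀ q) := by
    rwa [EuclideanDomain.gcd_isUnit_iff]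
  have hdeg : ((EuclideanDomain.gcd b₀ q).map φ).degree ≠ 0 := by
    rw [Polynomial.degree_map]
    exact fun h => hd (Polynomial.isUnit_iff_degree_eq_zero.mpr h)
  obtain ⟨α, hα⟩ := IsAlgClosed.exists_root _ hdeg
  have hb₀α : (b₀.map φ).IsRoot α :=
    hα.dvd (Polynomial.map_dvd _ (EuclideanDomain.gcd_dvd_left _ _))
  have hqα : (b₀.map φ).IsRoot (α + (ℓ : AlgebraicClosure K)) := by
    have := hα.dvd (Polynomial.map_dvd _ (EuclideanDomain.gcd_dvd_right b₀ q))
    rwa [hq, Polynomial.IsRoot, aux_comp_map_eval', map_natCast] at this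
  obtain ⟨_, hno⟩ := (part3 _).mp hqα
  refine hno ℓ hℓ ?_
  rw [add_sub_cancel_right]
  exact hb₀α.dvd (Polynomial.map_dvd _ hb₀dvd)
end

section
/- Let K be a field of characteristic zero, b ∈ K[x] monic squarefree nonconstant, S its shift set, b₀ the divisor of initial roots (as produced by the simple reduction construction), and b_ℓ = gcd(b₀(x-ℓ), b(x)) for ℓ ∈ S ∪ {0}. Then b = Π_{ℓ ∈ S∪{0}} b_ℓ and gcd(b_ℓ, b_j) = 1 for ℓ ≠ j. -/
/-!
Write `taylor t p = p(x + t)`, so that `b₀ = b / L` with `L = lcm_{ℓ ∈ S} gcd(b, taylor (-ℓ) b)`.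
Since `b = L * b₀` is squarefree, a prime `p ∣ b` divides `b₀` exactly when it does not divide `L`,
i.e. when no shift `p(x + m)` with `m ≥ 1` divides `b`. Consequently two shifts `b₀(x - ℓ)` and
`b₀(x - j)`, `ℓ < j`, have no common prime factor `p`: otherwise `p(x + ℓ) ∣ b₀` and its shift
`p(x + j) ∣ b`. Conversely, for a prime `p ∣ b` the `ℓ` with `p(x + ℓ) ∣ b` are finitely many (the
`α - ℓ`, for a root `α` of `p`, are roots of `b`), and for the largest one `p(x + ℓ) ∣ b₀`, so
`p ∣ b_ℓ`. The monic product of the pairwise coprime `b_ℓ` thus divides `b` and has every prime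
factor of the squarefree `b`, so it is `b`.
-/

open Polynomial

theorem associated_of_dvd_of_forall_prime_dvd {α : Type*} [CommMonoidWithZero α]
    [UniqueFactorizationMonoid α] {a b : α} (hb : Squarefree b) (hab : a ∣ b)
    (h : ∀ p, Prime p → p ∣ b → p ∣ a) : Associated a b := by
  obtain ⟨c, rfl⟩ := hab
  refine associated_mul_unit_right a c (by_contra fun hc => ?_)
  have hc0 : c ≠ 0 := by rintro rfl; exact hc (hb 0 (by simp))
  obtain ⟨p, hp, hpc⟩ := WfDvdMonoid.exists_irreducible_factor hc hc0
  have hpa : p ∣ a := h p hp.prime (dvd_mul_of_dvd_right hpc a)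
  exact hp.not_isUnit (hb p (mul_dvd_mul hpa hpc))

theorem Finset.lcm_gcd_mul_div_eq {R ι : Type*} [EuclideanDomain R] [NormalizedGCDMonoid R]
    {a : R} (ha : a ≠ 0) (s : Finset ι) (g : ι → R) :
    s.lcm (fun i => GCDMonoid.gcd a (g i)) * (a / s.lcm fun i => GCDMonoid.gcd a (g i)) = a := by
  have hdvd : s.lcm (fun i => GCDMonoid.gcd a (g i)) ∣ a :=
    Finset.lcm_dvd fun i _ => gcd_dvd_left _ _
  exact EuclideanDomain.mul_div_cancel' (ne_zero_of_dvd_ne_zero ha hdvd) hdvd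

namespace Polynomial

section CommRing

variable {R : Type*} [CommRing R] {p q : R[X]} {t : R}

theorem taylor_dvd_taylor_iff : taylor t p ∣ taylor t q ↔ p ∣ q :=
  map_dvd_iff (taylorEquiv t)

theorem dvd_taylor_iff : p ∣ taylor t q ↔ taylor (-t) p ∣ q := by
  rw [← taylor_dvd_taylor_iff (t := -t), taylor_taylor, neg_add_cancel, taylor_zero]

theorem _root_.Prime.taylor (hp : Prime p) (t : R) : Prime (taylor t p) :=
  (MulEquiv.prime_iff (taylorEquiv t).toMulEquiv).mpr hp

theorem comp_X_sub_C (p : R[X]) (t : R) : p.comp (X - C t) = taylor (-t) p := by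
  rw [taylor_apply, map_neg, sub_eq_add_neg]

end CommRing

theorem finite_setOf_taylor_dvd {K : Type*} [Field K] {p q : K[X]} (hp : 0 < p.degree)
    (hq : q ≠ 0) : {t : K | taylor t p ∣ q}.Finite := by
  obtain ⟨α, hα⟩ := IsAlgClosed.exists_aeval_eq_zero (AlgebraicClosure K) p hp.ne'
  have hinj : Function.Injective fun t : K => α - algebraMap K (AlgebraicClosure K) t :=
    fun s t hst => (algebraMap K _).injective (sub_right_injective hst)
  refine ((q.rootSet_finite _).preimage hinj.injOn).subset fun t ht => ?_
  refine (mem_rootSet_of_ne hq).mpr (aeval_eq_zero_of_dvd_aeval_eq_zero ht ?_)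
  simp [taylor_apply, aeval_comp, hα]

theorem monic_gcd {K : Type*} [Field K] [DecidableEq K] (p : K[X]) {q : K[X]} (hq : q ≠ 0) :
    (gcd p q).Monic := by
  rw [← normalize_gcd]
  exact monic_normalize (gcd_ne_zero_of_right hq)

theorem prod_eq_of_forall_prime_dvd {K ι : Type*} [Field K] {s : Finset ι} {f : ι → K[X]}
    {b : K[X]} (hb : b.Monic) (hsf : Squarefree b) (hf : ∀ i ∈ s, (f i).Monic)
    (hfb : ∀ i ∈ s, f i ∣ b) (hcop : ∀ i ∈ s, ∀ j ∈ s, i ≠ j → IsCoprime (f i) (f j))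
    (hcover : ∀ p, Prime p → p ∣ b → ∃ i ∈ s, p ∣ f i) : ∏ i ∈ s, f i = b := by
  refine eq_of_monic_of_associated (monic_prod_of_monic _ _ hf) hb
    (associated_of_dvd_of_forall_prime_dvd hsf
      (s.prod_dvd_of_coprime (fun i hi j hj => hcop i hi j hj) hfb) fun p hp hpb => ?_)
  obtain ⟨i, hi, hpi⟩ := hcover p hp hpb
  exact hpi.trans (Finset.dvd_prod_of_mem f hi)

theorem isCoprime_taylor_of_ne {K : Type*} [Field K] {f : K[X]} (hf : f ≠ 0)
    (h : ∀ q, Prime q → q ∣ f → ∀ m : ℕ, 1 ≤ m → ¬taylor (m : K) q ∣ f) {ℓ j : ℕ}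
    (hne : ℓ ≠ j) : IsCoprime (taylor (-(ℓ : K)) f) (taylor (-(j : K)) f) := by
  wlog hlt : ℓ < j generalizing ℓ j
  · exact (this hne.symm (by omega)).symm
  refine isCoprime_of_prime_dvd (by simp [hf]) fun p hp hℓ hj => ?_
  rw [dvd_taylor_iff, neg_neg] at hℓ hj
  refine h _ (hp.taylor _) hℓ (j - ℓ) (by omega) ?_
  rwa [taylor_taylor, Nat.cast_sub hlt.le, sub_add_cancel]

section ShiftSet

variable {K : Type*} [Field K] {b p : K[X]} {S : Finset ℕ}

theorem mem_of_prime_dvd_of_taylor_dvd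
    (hS : ∀ ℓ : ℕ, ℓ ∈ S ↔ 1 ≤ ℓ ∧ ¬IsCoprime b (taylor (ℓ : K) b)) {m : ℕ} (hm : 1 ≤ m)
    (hp : Prime p) (hpb : p ∣ b) (hmp : taylor (m : K) p ∣ b) : m ∈ S :=
  (hS m).mpr ⟨hm, fun hcop =>
    (hp.taylor _).not_isUnit (hcop.isUnit_of_dvd' hmp (taylor_dvd_taylor_iff.mpr hpb))⟩

theorem prime_dvd_lcm_gcd_taylor_iff [DecidableEq K]
    (hS : ∀ ℓ : ℕ, ℓ ∈ S ↔ 1 ≤ ℓ ∧ ¬IsCoprime b (taylor (ℓ : K) b)) (hp : Prime p)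
    (hpb : p ∣ b) :
    p ∣ S.lcm (fun ℓ : ℕ => gcd b (taylor (-(ℓ : K)) b)) ↔
      ∃ m : ℕ, 1 ≤ m ∧ taylor (m : K) p ∣ b := by
  constructor
  · intro h
    obtain ⟨m, hmS, hpm⟩ := hp.exists_mem_finset_dvd (h.trans (S.lcm_dvd_prod _))
    refine ⟨m, ((hS m).mp hmS).1, ?_⟩
    simpa using dvd_taylor_iff.mp (hpm.trans (gcd_dvd_right _ _))
  · rintro ⟨m, hm, hmp⟩
    refine dvd_trans ?_ (Finset.dvd_lcm (mem_of_prime_dvd_of_taylor_dvd hS hm hp hpb hmp))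
    exact dvd_gcd hpb (dvd_taylor_iff.mpr (by rwa [neg_neg]))

theorem prime_dvd_div_lcm_gcd_taylor_iff [DecidableEq K] (hb : Squarefree b)
    (hS : ∀ ℓ : ℕ, ℓ ∈ S ↔ 1 ≤ ℓ ∧ ¬IsCoprime b (taylor (ℓ : K) b)) (hp : Prime p) :
    p ∣ b / S.lcm (fun ℓ : ℕ => gcd b (taylor (-(ℓ : K)) b)) ↔
      p ∣ b ∧ ∀ m : ℕ, 1 ≤ m → ¬taylor (m : K) p ∣ b := by
  have hbL := S.lcm_gcd_mul_div_eq hb.ne_zero fun ℓ : ℕ => taylor (-(ℓ : K)) b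
  constructor
  · intro h
    have hpb : p ∣ b := hbL ▸ dvd_mul_of_dvd_right h _
    refine ⟨hpb, fun m hm hmp => hp.not_isUnit (hb p ?_)⟩
    rw [← hbL]
    exact mul_dvd_mul ((prime_dvd_lcm_gcd_taylor_iff hS hp hpb).mpr ⟨m, hm, hmp⟩) h
  · rintro ⟨hpb, hnot⟩
    refine ((hp.dvd_or_dvd (hbL.symm ▸ hpb)).resolve_left fun hpL => ?_)
    obtain ⟨m, hm, hmp⟩ := (prime_dvd_lcm_gcd_taylor_iff hS hp hpb).mp hpL
    exact hnot m hm hmp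

theorem isCoprime_taylor_div_lcm_gcd_taylor [DecidableEq K] (hb : Squarefree b)
    (hS : ∀ ℓ : ℕ, ℓ ∈ S ↔ 1 ≤ ℓ ∧ ¬IsCoprime b (taylor (ℓ : K) b)) {ℓ j : ℕ} (hne : ℓ ≠ j) :
    IsCoprime (taylor (-(ℓ : K)) (b / S.lcm fun ℓ : ℕ => gcd b (taylor (-(ℓ : K)) b)))
      (taylor (-(j : K)) (b / S.lcm fun ℓ : ℕ => gcd b (taylor (-(ℓ : K)) b))) := by
  have hbL := S.lcm_gcd_mul_div_eq hb.ne_zero fun ℓ : ℕ => taylor (-(ℓ : K)) b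
  refine isCoprime_taylor_of_ne (right_ne_zero_of_mul (hbL ▸ hb.ne_zero))
    (fun q hq hqb₀ m hm hmq => ?_) hne
  exact ((prime_dvd_div_lcm_gcd_taylor_iff hb hS hq).mp hqb₀).2 m hm
    (hbL ▸ dvd_mul_of_dvd_right hmq _)

theorem exists_mem_insert_zero_dvd_taylor_div_lcm_gcd_taylor [DecidableEq K] [CharZero K]
    (hb : Squarefree b)
    (hS : ∀ ℓ : ℕ, ℓ ∈ S ↔ 1 ≤ ℓ ∧ ¬IsCoprime b (taylor (ℓ : K) b)) (hp : Prime p)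
    (hpb : p ∣ b) :
    ∃ ℓ ∈ insert 0 S,
      p ∣ taylor (-(ℓ : K)) (b / S.lcm fun ℓ : ℕ => gcd b (taylor (-(ℓ : K)) b)) := by
  set T : Set ℕ := {ℓ | taylor (ℓ : K) p ∣ b}
  have hT : T.Finite := Set.Finite.preimage (f := ((↑) : ℕ → K)) Nat.cast_injective.injOn
    (finite_setOf_taylor_dvd (degree_pos_of_irreducible hp.irreducible) hb.ne_zero)
  have h0 : 0 ∈ T := by simpa [T] using hpb
  set ℓ := sSup T
  have hℓ : ℓ ∈ T := Nat.sSup_mem ⟨0, h0⟩ hT.bddAbove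
  have hinit : taylor (ℓ : K) p ∣ b / S.lcm fun ℓ : ℕ => gcd b (taylor (-(ℓ : K)) b) := by
    refine (prime_dvd_div_lcm_gcd_taylor_iff hb hS (hp.taylor _)).mpr ⟨hℓ, fun m hm hmℓ => ?_⟩
    rw [taylor_taylor, ← Nat.cast_add] at hmℓ
    have := le_csSup hT.bddAbove hmℓ
    omega
  refine ⟨ℓ, ?_, dvd_taylor_iff.mpr (by rwa [neg_neg])⟩
  rcases Nat.eq_zero_or_pos ℓ with h | h
  · simp [h]
  · exact Finset.mem_insert_of_mem (mem_of_prime_dvd_of_taylor_dvd hS h hp hpb hℓ)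

end ShiftSet

end Polynomial

theorem simple_reduction_factorization_general {K : Type*} [Field K] [CharZero K] [DecidableEq K]
    (b : Polynomial K) (hmonic : b.Monic) (hsf : Squarefree b)
    (S : Finset ℕ)
    (hS : ∀ ℓ : ℕ, ℓ ∈ S ↔ (1 ≤ ℓ ∧ ¬ IsCoprime b (b.comp (Polynomial.X + Polynomial.C (ℓ : K)))))
    (b₀ : Polynomial K)
    (hb₀ : b₀ = b / S.lcm fun ℓ => gcd b (b.comp (Polynomial.X - Polynomial.C (ℓ : K))))
    (bfun : ℕ → Polynomial K)
    (hbfun : ∀ ℓ : ℕ, bfun ℓ = gcd (b₀.comp (Polynomial.X - Polynomial.C (ℓ : K))) b) :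
    (∏ ℓ ∈ insert 0 S, bfun ℓ) = b ∧
    (∀ ℓ ∈ insert 0 S, ∀ j ∈ insert 0 S, ℓ ≠ j → IsCoprime (bfun ℓ) (bfun j)) := by
  simp only [← taylor_apply] at hS
  simp only [comp_X_sub_C] at hb₀ hbfun
  subst hb₀
  have hcop : ∀ ℓ ∈ insert 0 S, ∀ j ∈ insert 0 S, ℓ ≠ j → IsCoprime (bfun ℓ) (bfun j) :=
    fun ℓ _ j _ hne => hbfun ℓ ▸ hbfun j ▸
      ((isCoprime_taylor_div_lcm_gcd_taylor hsf hS hne).of_isCoprime_of_dvd_left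
        (gcd_dvd_left _ _)).of_isCoprime_of_dvd_right (gcd_dvd_left _ _)
  refine ⟨prod_eq_of_forall_prime_dvd hmonic hsf (fun ℓ _ => hbfun ℓ ▸ monic_gcd _ hmonic.ne_zero)
    (fun ℓ _ => hbfun ℓ ▸ gcd_dvd_right _ _) hcop fun p hp hpb => ?_, hcop⟩
  obtain ⟨ℓ, hℓ, hpℓ⟩ := exists_mem_insert_zero_dvd_taylor_div_lcm_gcd_taylor hsf hS hp hpb
  exact ⟨ℓ, hℓ, hbfun ℓ ▸ dvd_gcd hpℓ hpb⟩

/-- The shift-free factorization underlying simple reduction: with `b` monic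
squarefree nonconstant, `S` its shift set, `b₀` the divisor of initial roots and
`b_ℓ = gcd(b₀(x-ℓ), b(x))` for `ℓ ∈ S ∪ {0}`, one has `b = Π_ℓ b_ℓ` with the
`b_ℓ` pairwise coprime. -/
theorem simple_reduction_factorization {K : Type*} [Field K] [CharZero K] [DecidableEq K]
    (b : Polynomial K) (hmonic : b.Monic) (hsf : Squarefree b) (hdeg : 0 < b.degree)
    (S : Finset ℕ)
    (hS : ∀ ℓ : ℕ, ℓ ∈ S ↔ (1 ≤ ℓ ∧ ¬ IsCoprime b (b.comp (Polynomial.X + Polynomial.C (ℓ : K)))))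
    (b₀ : Polynomial K)
    (hb₀ : b₀ = b / S.lcm fun ℓ => gcd b (b.comp (Polynomial.X - Polynomial.C (ℓ : K))))
    (bfun : ℕ → Polynomial K)
    (hbfun : ∀ ℓ : ℕ, bfun ℓ = gcd (b₀.comp (Polynomial.X - Polynomial.C (ℓ : K))) b) :
    (∏ ℓ ∈ insert 0 S, bfun ℓ) = b ∧
    (∀ ℓ ∈ insert 0 S, ∀ j ∈ insert 0 S, ℓ ≠ j → IsCoprime (bfun ℓ) (bfun j)) :=
  simple_reduction_factorization_general b hmonic hsf S hS b₀ hb₀ bfun hbfun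
end

section
/- Let K be an algebraically closed field of characteristic zero and let f ∈ K(x) be proper with squarefree denominator. Then there exists a proper rational function f̄ ∈ K(x) with squarefree denominator such that f - f̄ is rationally summable and either f̄ = 0 or the denominator of f̄ has dispersion 0, and moreover for every ℤ-orbit ω, f̄ has at most one pole in ω and its residue there equals dres(f, ω, 1). -/
open Polynomial

/-!
Write `f = ∑ α, c α / (x - α)`. Since `1/(x - α) - 1/(x - α - 1) = Δ(1/(x - α - 1))`, telescoping
shows that `1/(x - α) - 1/(x - α - n)` is summable for every `n ∈ ℤ`. Hence moving every pole
`α` to a fixed representative of its orbit `α + ℤ` changes `f` by a summable function, and the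
poles of `f` lying in one orbit merge into a single pole whose residue is the sum of their
residues.
-/

theorem sub_mem_of_forall_sub_add_one_mem {M S : Type*} [AddCommGroup M] [SetLike S M]
    [AddSubgroupClass S M] (p : S) (u : ℤ → M) (h : ∀ n, u n - u (n + 1) ∈ p) (n : ℤ) :
    u 0 - u n ∈ p := by
  induction n using Int.induction_on with
  | zero => simp
  | succ k ih => simpa only [sub_add_sub_cancel] using add_mem ih (h k)
  | pred k ih =>
    have step := h (-k - 1)
    rw [sub_add_cancel] at step
    simpa only [sub_sub_sub_cancel_right] using sub_mem ih step

section Shift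

variable {K : Type*} [Field K]

theorem shift_eq_laurent (f : RatFunc K) : shift f = RatFunc.laurent 1 f := by
  conv_rhs => rw [← RatFunc.num_div_denom f]
  rw [shift, RatFunc.mk_eq_div, RatFunc.laurent_div, taylor_apply, taylor_apply, map_one]

variable (K) in
noncomputable def ratSummable : Submodule K (RatFunc K) :=
  LinearMap.range ((RatFunc.laurent (1 : K)).toLinearMap - LinearMap.id)

theorem mem_ratSummable_iff {h : RatFunc K} : h ∈ ratSummable K ↔ ∃ g, h = shift g - g := by
  simp only [ratSummable, LinearMap.mem_range, LinearMap.sub_apply, AlgHom.toLinearMap_apply,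
    LinearMap.id_apply, shift_eq_laurent, eq_comm]

theorem inv_X_sub_C_sub_inv_X_sub_C_add_one_mem_ratSummable (α : K) :
    (RatFunc.X - RatFunc.C α)⁻¹ - (RatFunc.X - RatFunc.C (α + 1))⁻¹ ∈ ratSummable K := by
  refine mem_ratSummable_iff.2 ⟨(RatFunc.X - RatFunc.C (α + 1))⁻¹, ?_⟩
  rw [shift_eq_laurent, map_inv₀, map_sub, RatFunc.laurent_X, RatFunc.laurent_C, map_add,
    map_one, add_sub_add_right_eq_sub]

theorem inv_X_sub_C_sub_inv_X_sub_C_add_intCast_mem_ratSummable (α : K) (n : ℤ) :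
    (RatFunc.X - RatFunc.C α)⁻¹ - (RatFunc.X - RatFunc.C (α + n))⁻¹ ∈ ratSummable K := by
  simpa using sub_mem_of_forall_sub_add_one_mem (ratSummable K)
    (fun m : ℤ => (RatFunc.X - RatFunc.C (α + m))⁻¹) (fun m => by
      simpa [add_assoc] using inv_X_sub_C_sub_inv_X_sub_C_add_one_mem_ratSummable (α + m)) n

end Shift

section IntOrbit

variable {R : Type*} [Ring R]

noncomputable def intOrbitRep (α : R) : R :=
  (QuotientAddGroup.mk α : R ⧸ AddSubgroup.zmultiples (1 : R)).out

theorem intOrbitRep_eq_intOrbitRep_iff {α β : R} :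
    intOrbitRep α = intOrbitRep β ↔ ∃ n : ℤ, β = α + n := by
  rw [intOrbitRep, intOrbitRep, Quotient.out_inj, QuotientAddGroup.eq,
    AddSubgroup.mem_zmultiples_iff]
  simp only [zsmul_one, eq_neg_add_iff_add_eq, eq_comm]

theorem intOrbitRep_intOrbitRep (α : R) : intOrbitRep (intOrbitRep α) = intOrbitRep α := by
  rw [intOrbitRep, intOrbitRep, QuotientAddGroup.out_eq']

theorem exists_intOrbitRep_eq_add_intCast (α : R) : ∃ n : ℤ, intOrbitRep α = α + n :=
  intOrbitRep_eq_intOrbitRep_iff.1 (intOrbitRep_intOrbitRep α).symm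

theorem intOrbitRep_eq_self_of_mapDomain_ne_zero {M : Type*} [AddCommMonoid M] {c : R →₀ M}
    {α : R} (hα : c.mapDomain intOrbitRep α ≠ 0) : intOrbitRep α = α := by
  obtain ⟨β, rfl⟩ := not_not.1 (mt (Finsupp.mapDomain_of_notMem_range c α) hα)
  exact intOrbitRep_intOrbitRep β

theorem mapDomain_intOrbitRep_apply [CharZero R] {M : Type*} [AddCommMonoid M] (c : R →₀ M)
    (α : R) : c.mapDomain intOrbitRep (intOrbitRep α) = ∑ᶠ n : ℤ, c (α + n) := by
  classical
  have orbit : Set.range (fun n : ℤ => α + n) = {β | intOrbitRep β = intOrbitRep α} := by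
    ext β
    simp [intOrbitRep_eq_intOrbitRep_iff, eq_comm]
  have hinj : Function.Injective (fun n : ℤ => α + n) :=
    (add_right_injective α).comp Int.cast_injective
  rw [Finsupp.mapDomain_apply_eq_sum, ← finsum_mem_range hinj, orbit]
  refine (finsum_mem_eq_sum_of_inter_support_eq _ ?_).symm
  ext β
  simp [and_comm]

end IntOrbit

section SimplePoles

variable {K : Type*} [Field K]

variable (K) in
noncomputable def simplePoleSum : (K →₀ K) →ₗ[K] RatFunc K :=
  Finsupp.linearCombination K fun α => (RatFunc.X - RatFunc.C α)⁻¹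

theorem finsum_C_div_X_sub_C_eq_simplePoleSum (c : K →₀ K) :
    ∑ᶠ α, RatFunc.C (c α) / (RatFunc.X - RatFunc.C α) = simplePoleSum K c := by
  have support_subset :
      (Function.support fun α => RatFunc.C (c α) / (RatFunc.X - RatFunc.C α)) ⊆ c.support :=
    Function.support_subset_iff'.2 fun α hα => by simp [Finsupp.notMem_support_iff.1 hα]
  rw [simplePoleSum, Finsupp.linearCombination_apply, Finsupp.sum,
    finsum_eq_sum_of_support_subset _ support_subset]
  simp only [RatFunc.smul_eq_C_mul, div_eq_mul_inv]

theorem simplePoleSum_sub_simplePoleSum_mapDomain_intOrbitRep_mem (c : K →₀ K) :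
    simplePoleSum K c - simplePoleSum K (c.mapDomain intOrbitRep) ∈ ratSummable K := by
  rw [simplePoleSum, Finsupp.linearCombination_mapDomain, Finsupp.linearCombination_apply,
    Finsupp.linearCombination_apply, ← Finsupp.sum_sub, Finsupp.sum]
  refine Submodule.sum_mem _ fun α _ => ?_
  obtain ⟨n, hn⟩ := exists_intOrbitRep_eq_add_intCast α
  rw [Function.comp_apply, ← smul_sub, hn]
  exact Submodule.smul_mem _ _ (inv_X_sub_C_sub_inv_X_sub_C_add_intCast_mem_ratSummable α n)

end SimplePoles

theorem simple_reduction_exists_general {K : Type*} [Field K] [CharZero K]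
    (f : RatFunc K) (c : K → K) (hfin : (Function.support c).Finite)
    (hf : f = ∑ᶠ α : K, RatFunc.C (c α) / (RatFunc.X - RatFunc.C α)) :
    ∃ cbar : K → K, (Function.support cbar).Finite ∧
      (∃ g : RatFunc K,
        f - (∑ᶠ α : K, RatFunc.C (cbar α) / (RatFunc.X - RatFunc.C α)) = shift g - g) ∧
      (∀ α β : K, cbar α ≠ 0 → cbar β ≠ 0 → (∃ n : ℤ, β = α + (n : K)) → α = β) ∧
      (∀ α : K, cbar α ≠ 0 → cbar α = ∑ᶠ n : ℤ, c (α + (n : K))) := by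
  set c' := Finsupp.ofSupportFinite c hfin
  have hc : ⇑c' = c := Finsupp.ofSupportFinite_coe
  refine ⟨c'.mapDomain intOrbitRep, (c'.mapDomain intOrbitRep).hasFiniteSupport, ?_, ?_, ?_⟩
  · rw [hf, ← hc, finsum_C_div_X_sub_C_eq_simplePoleSum, finsum_C_div_X_sub_C_eq_simplePoleSum]
    exact mem_ratSummable_iff.1 (simplePoleSum_sub_simplePoleSum_mapDomain_intOrbitRep_mem c')
  · intro α β hα hβ horbit
    rw [← intOrbitRep_eq_self_of_mapDomain_ne_zero hα,
      ← intOrbitRep_eq_self_of_mapDomain_ne_zero hβ]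
    exact intOrbitRep_eq_intOrbitRep_iff.2 horbit
  · intro α hα
    rw [← hc, ← mapDomain_intOrbitRep_apply, intOrbitRep_eq_self_of_mapDomain_ne_zero hα]

/-- Simple reduction: a proper rational function `f = Σ_α c(α)/(x-α)` with only
simple poles admits a reduced form `f̄ = Σ_α c̄(α)/(x-α)` such that `f - f̄` is
rationally summable, `f̄` has at most one pole in each `ℤ`-orbit, and the
residue of `f̄` at such a pole equals the first-order discrete residue of `f`
at that orbit. -/
theorem simple_reduction_exists {K : Type*} [Field K] [CharZero K] [IsAlgClosed K]
    (f : RatFunc K) (c : K → K) (hfin : (Function.support c).Finite)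
    (hf : f = ∑ᶠ α : K, RatFunc.C (c α) / (RatFunc.X - RatFunc.C α)) :
    ∃ cbar : K → K, (Function.support cbar).Finite ∧
      (∃ g : RatFunc K,
        f - (∑ᶠ α : K, RatFunc.C (cbar α) / (RatFunc.X - RatFunc.C α)) = shift g - g) ∧
      (∀ α β : K, cbar α ≠ 0 → cbar β ≠ 0 → (∃ n : ℤ, β = α + (n : K)) → α = β) ∧
      (∀ α : K, cbar α ≠ 0 → cbar α = ∑ᶠ n : ℤ, c (α + (n : K))) :=
  simple_reduction_exists_general f c hfin hf
end
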